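/- arXiv:1203.2226 — 8 statements merged into one kernel-verified Lean document; each statement's English description precedes it below -/
import Mathlib

section
/- Let d ≥ 2 be an integer and let B' be a real number with 0 < B' ≤ (d+1)/(d-1). Then for every real z > 1 one has z^(1/d) > (B'·z + 1)/(z + B'), and for every real z with 0 < z < 1 one has z^(1/d) < (B'·z + 1)/(z + B'). -/
open Finset

private lemma geom_fact (d : ℕ) (hd : 2 ≤ d) (t : ℝ) :
    (t - 1) * (∑ j ∈ Finset.range (d - 1), t ^ (j + 1)) = t ^ d - t := by
  have hS : (∑ j ∈ Finset.range (d - 1), t ^ (j + 1))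
      = (∑ j ∈ Finset.range (d - 1), t ^ j) * t := by
    rw [Finset.sum_mul]
    exact Finset.sum_congr rfl fun j _ => (pow_succ t j)
  have hgeo := geom_sum_mul t (d - 1)
  have htd : t ^ (d - 1) * t = t ^ d := by
    rw [← pow_succ]; congr 1; omega
  calc (t - 1) * (∑ j ∈ Finset.range (d - 1), t ^ (j + 1))
      = ((∑ j ∈ Finset.range (d - 1), t ^ j) * (t - 1)) * t := by rw [hS]; ring
    _ = (t ^ (d - 1) - 1) * t := by rw [hgeo]
    _ = t ^ d - t := by rw [sub_mul, one_mul, htd]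

private lemma key_pos (d : ℕ) (hd : 2 ≤ d) (B' : ℝ) (hB0 : 0 < B')
    (hB : B' ≤ ((d : ℝ) + 1) / ((d : ℝ) - 1)) (t : ℝ) (ht : 0 < t) (ht1 : t ≠ 1) :
    0 < t ^ d + (1 - B') * (∑ j ∈ Finset.range (d - 1), t ^ (j + 1)) + 1 := by
  set S := ∑ j ∈ Finset.range (d - 1), t ^ (j + 1) with hSdef
  have hne : (Finset.range (d - 1)).Nonempty := by
    rw [Finset.nonempty_range_iff]; omega
  have hSpos : 0 < S := Finset.sum_pos (fun j _ => pow_pos ht _) hne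
  have htd : 0 < t ^ d := pow_pos ht d
  rcases le_or_gt B' 1 with h1 | h1
  · have : 0 ≤ (1 - B') * S := mul_nonneg (by linarith) hSpos.le
    linarith
  · -- B' > 1
    have hdR : (1 : ℝ) ≤ (d : ℝ) - 1 := by
      have : (2 : ℝ) ≤ (d : ℝ) := by exact_mod_cast hd
      linarith
    have hB2 : (B' - 1) * ((d : ℝ) - 1) ≤ 2 := by
      have h := (le_div_iff₀ (by linarith : (0:ℝ) < (d : ℝ) - 1)).mp hB
      nlinarith
    -- pairing bound: 2 * S < (d-1) * (t^d + 1)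
    have hrefl : (∑ j ∈ Finset.range (d - 1), t ^ (d - (j + 1))) = S := by
      rw [hSdef, ← Finset.sum_range_reflect]
      apply Finset.sum_congr rfl
      intro j hj
      rw [Finset.mem_range] at hj
      congr 1
      omega
    have hpair : ∀ j ∈ Finset.range (d - 1),
        t ^ (j + 1) + t ^ (d - (j + 1)) < t ^ d + 1 := by
      intro j hj
      rw [Finset.mem_range] at hj
      set k := j + 1 with hk
      set m := d - (j + 1) with hm
      have hkm : k + m = d := by omega
      have hk0 : k ≠ 0 := by omega
      have hm0 : m ≠ 0 := by omega
      have hmul : t ^ k * t ^ m = t ^ d := by rw [← pow_add, hkm]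
      have hprod : 0 < (t ^ k - 1) * (t ^ m - 1) := by
        rcases lt_or_gt_of_ne ht1 with h | h
        · have h1 : t ^ k < 1 := pow_lt_one₀ ht.le h hk0
          have h2 : t ^ m < 1 := pow_lt_one₀ ht.le h hm0
          exact mul_pos_of_neg_of_neg (by linarith) (by linarith)
        · have h1 : 1 < t ^ k := one_lt_pow₀ h hk0
          have h2 : 1 < t ^ m := one_lt_pow₀ h hm0
          exact mul_pos (by linarith) (by linarith)
      nlinarith
    have h2S : 2 * S < ((d : ℝ) - 1) * (t ^ d + 1) := by
      have hsum : (∑ j ∈ Finset.range (d - 1), (t ^ (j + 1) + t ^ (d - (j + 1))))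
          < ∑ _j ∈ Finset.range (d - 1), (t ^ d + 1) :=
        Finset.sum_lt_sum_of_nonempty hne hpair
      rw [Finset.sum_add_distrib, hrefl, Finset.sum_const, Finset.card_range] at hsum
      have hcast : ((d - 1 : ℕ) : ℝ) = (d : ℝ) - 1 := by
        have : (1 : ℕ) ≤ d := by omega
        push_cast [this]
        ring
      rw [nsmul_eq_mul, hcast] at hsum
      linarith
    have hstep : (B' - 1) * (2 * S) < (B' - 1) * (((d : ℝ) - 1) * (t ^ d + 1)) :=
      mul_lt_mul_of_pos_left h2S (by linarith)
    nlinarith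

/-- Lemma 2.6 of the paper: for an integer `d ≥ 2` and `0 < B' ≤ (d+1)/(d-1)`,
for every `z > 1` we have `z^(1/d) > (B'z+1)/(z+B')`, and for `0 < z < 1` the
inequality is reversed.  Here `z ^ (1/d)` is the real (`rpow`) d-th root. -/
theorem ising_tree_recursion_stability (d : ℕ) (hd : 2 ≤ d) (B' : ℝ)
    (hB0 : 0 < B') (hB : B' ≤ ((d : ℝ) + 1) / ((d : ℝ) - 1)) :
    (∀ z : ℝ, 1 < z → (B' * z + 1) / (z + B') < z ^ ((1 : ℝ) / d)) ∧
    (∀ z : ℝ, 0 < z → z < 1 → z ^ ((1 : ℝ) / d) < (B' * z + 1) / (z + B')) := by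
  have hd0 : ((d : ℝ)) ≠ 0 := by
    have : (0 : ℝ) < (d : ℝ) := by exact_mod_cast (by omega : 0 < d)
    exact ne_of_gt this
  have hpow : ∀ z : ℝ, 0 < z → (z ^ ((1 : ℝ) / d)) ^ d = z := by
    intro z hz
    have h1 : ((1 : ℝ) / d) * d = 1 := by field_simp
    rw [← Real.rpow_natCast (z ^ ((1 : ℝ) / d)) d, ← Real.rpow_mul hz.le, h1,
      Real.rpow_one]
  constructor
  · intro z hz
    have hz0 : 0 < z := by linarith
    set t := z ^ ((1 : ℝ) / d) with htdef
    have ht0 : 0 < t := Real.rpow_pos_of_pos hz0 _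
    have htd : t ^ d = z := hpow z hz0
    have ht1 : 1 < t := by
      by_contra h
      push_neg at h
      have := pow_le_one₀ ht0.le h (n := d)
      rw [htd] at this
      linarith
    have hg := key_pos d hd B' hB0 hB t ht0 (by linarith)
    have hfact := geom_fact d hd t
    set S := ∑ j ∈ Finset.range (d - 1), t ^ (j + 1)
    rw [div_lt_iff₀ (by linarith : (0:ℝ) < z + B'), ← htd]
    have expand : t * (t ^ d + B') - (B' * t ^ d + 1)
        = (t - 1) * (t ^ d + (1 - B') * S + 1) := by
      linear_combination (B' - 1) * hfact
    nlinarith [mul_pos (by linarith : (0:ℝ) < t - 1) hg]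
  · intro z hz0 hz
    set t := z ^ ((1 : ℝ) / d) with htdef
    have ht0 : 0 < t := Real.rpow_pos_of_pos hz0 _
    have htd : t ^ d = z := hpow z hz0
    have ht1 : t < 1 := by
      by_contra h
      push_neg at h
      have := one_le_pow₀ h (n := d)
      rw [htd] at this
      linarith
    have hg := key_pos d hd B' hB0 hB t ht0 (by linarith)
    have hfact := geom_fact d hd t
    set S := ∑ j ∈ Finset.range (d - 1), t ^ (j + 1)
    rw [lt_div_iff₀ (by linarith : (0:ℝ) < z + B'), ← htd]
    have expand : t * (t ^ d + B') - (B' * t ^ d + 1)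
        = (t - 1) * (t ^ d + (1 - B') * S + 1) := by
      linear_combination (B' - 1) * hfact
    nlinarith [mul_neg_of_neg_of_pos (by linarith : t - 1 < 0) hg]
end

section
/- Let d ≥ 2 be an integer and let B' be a real number with B' ≤ (d+1)/(d-1). Then for every real w > 1, w^(d+1) − B'·w^d + B'·w − 1 > 0. -/
lemma ising_key (d : ℕ) (hd : 2 ≤ d) (w : ℝ) (hw : 1 < w) :
    0 < ((d:ℝ) - 1) * (w ^ (d+1) - 1) - ((d:ℝ) + 1) * (w ^ d - w) := by
  induction d, hd using Nat.le_induction with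
  | base =>
    have h : (0:ℝ) < w - 1 := by linarith
    push_cast
    nlinarith [mul_pos (mul_pos h h) h]
  | succ n hn ih =>
    have hw0 : (0:ℝ) < w := by linarith
    have hb : (1:ℝ) + ((n:ℝ)+1) * (w - 1) ≤ w ^ (n+1) := by
      have h := one_add_mul_le_pow (by linarith : (-2:ℝ) ≤ w - 1) (n+1)
      have hw1 : (1:ℝ) + (w - 1) = w := by ring
      rw [hw1] at h
      push_cast at h ⊢
      linarith [h]
    have hpow : w ^ (n+1+1) = w * w ^ (n+1) := by ring
    have hpow2 : w ^ (n+1) = w * w ^ n := by ring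
    push_cast
    nlinarith [mul_pos hw0 ih, mul_nonneg (sub_nonneg.2 hb) (le_of_lt (sub_pos.2 hw))]

/-- Polynomial form of Lemma 2.6: for an integer `d ≥ 2` and `B' ≤ (d+1)/(d-1)`,
for every real `w > 1` we have `w^(d+1) - B'·w^d + B'·w - 1 > 0`. -/
theorem ising_tree_polynomial_positive (d : ℕ) (hd : 2 ≤ d) (B' : ℝ)
    (hB : B' ≤ ((d : ℝ) + 1) / ((d : ℝ) - 1)) :
    ∀ w : ℝ, 1 < w → 0 < w ^ (d + 1) - B' * w ^ d + B' * w - 1 := by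
  intro w hw
  have hd1 : (1:ℝ) ≤ (d:ℝ) - 1 := by
    have : (2:ℝ) ≤ (d:ℝ) := by exact_mod_cast hd
    linarith
  have hd0 : (0:ℝ) < (d:ℝ) - 1 := by linarith
  have hB' : B' * ((d:ℝ) - 1) ≤ (d:ℝ) + 1 := by
    rw [le_div_iff₀ hd0] at hB; linarith
  have hwd : w < w ^ d := by
    calc w = w ^ 1 := (pow_one w).symm
    _ < w ^ d := pow_lt_pow_right₀ hw (by omega)
  have key := ising_key d hd w hw
  have h2 : B' * ((d:ℝ) - 1) * (w ^ d - w) ≤ ((d:ℝ) + 1) * (w ^ d - w) :=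
    mul_le_mul_of_nonneg_right hB' (by linarith)
  nlinarith [key, h2]
end

section
/- Let d ≥ 2 be an integer and let B' be a real number with 0 < B' ≤ (d+1)/(d-1). Then (i) there are no real numbers x > 1 and y > 1 such that both x^(1/d) ≤ (B'·y + 1)/(y + B') and y^(1/d) ≤ (B'·x + 1)/(x + B'); and (ii) there are no real numbers x, y with 0 < x < 1 and 0 < y < 1 such that both x^(1/d) ≥ (B'·y + 1)/(y + B') and y^(1/d) ≥ (B'·x + 1)/(x + B'). -/
/-!
Let `f t = (B' t + 1) / (t + B')`. For `s > 1` one has `f (s ^ d) < s`, and for `0 < s < 1` the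
reverse, so an off-diagonal solution above `1` would give
`x^(1/d) ≤ f y < y^(1/d) ≤ f x < x^(1/d)`, and symmetrically below `1`.
Clearing denominators and dividing by `(s - 1) ^ 2`, `f (s ^ d) < s` becomes
`B' (s + ⋯ + s^(d-1)) < 1 + s + ⋯ + s^d`, which follows from `B' ≤ (d+1)/(d-1)` and the pairing
`s^i + s^(d-i) < 1 + s^d`.
-/

open Finset

lemma pow_add_pow_lt_one_add_pow_add {s : ℝ} (hs : 0 ≤ s) (hs1 : s ≠ 1) {i j : ℕ}
    (hi : i ≠ 0) (hj : j ≠ 0) : s ^ i + s ^ j < 1 + s ^ (i + j) := by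
  have hprod : 0 < (1 - s ^ i) * (1 - s ^ j) := by
    rcases hs1.lt_or_gt with h | h
    · exact mul_pos (by linarith [pow_lt_one₀ hs h hi]) (by linarith [pow_lt_one₀ hs h hj])
    · exact mul_pos_of_neg_of_neg (by linarith [one_lt_pow₀ h hi])
        (by linarith [one_lt_pow₀ h hj])
  linarith [pow_add s i j]

lemma two_mul_sum_Ico_pow_lt {s : ℝ} (hs : 0 ≤ s) (hs1 : s ≠ 1) {d : ℕ} (hd : 2 ≤ d) :
    2 * ∑ i ∈ Ico 1 d, s ^ i < (d - 1) * (1 + s ^ d) := by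
  have hreflect : ∑ i ∈ Ico 1 d, s ^ (d - i) = ∑ i ∈ Ico 1 d, s ^ i := by
    rw [sum_Ico_reflect (s ^ ·) 1 (by omega), Nat.add_sub_cancel_left, Nat.add_sub_cancel]
  have hpair : ∑ i ∈ Ico 1 d, (s ^ i + s ^ (d - i)) < ∑ _i ∈ Ico 1 d, (1 + s ^ d) :=
    sum_lt_sum_of_nonempty (nonempty_Ico.mpr (by omega)) fun i hi => by
      obtain ⟨hi1, hid⟩ := mem_Ico.mp hi
      simpa [Nat.add_sub_cancel' hid.le] using
        pow_add_pow_lt_one_add_pow_add hs hs1 (i := i) (j := d - i) (by omega) (by omega)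
  rw [sum_add_distrib, hreflect, sum_const, Nat.card_Ico, nsmul_eq_mul,
    Nat.cast_sub (by omega : 1 ≤ d), Nat.cast_one] at hpair
  linarith

lemma mul_sum_Ico_pow_lt_sum_range_pow {s : ℝ} (hs : 0 ≤ s) (hs1 : s ≠ 1) {d : ℕ} (hd : 2 ≤ d)
    {B : ℝ} (hB : B ≤ (d + 1) / (d - 1)) :
    B * ∑ i ∈ Ico 1 d, s ^ i < ∑ i ∈ range (d + 1), s ^ i := by
  have hd1 : (0 : ℝ) < d - 1 := by
    have : (2 : ℝ) ≤ d := by exact_mod_cast hd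
    linarith
  have hrange : ∑ i ∈ range (d + 1), s ^ i = 1 + ∑ i ∈ Ico 1 d, s ^ i + s ^ d := by
    rw [sum_range_succ, range_eq_Ico, sum_eq_sum_Ico_succ_bot (by omega), pow_zero]
  set T := ∑ i ∈ Ico 1 d, s ^ i
  have hT : 0 ≤ T := sum_nonneg fun i _ => pow_nonneg hs i
  have hBT : (d - 1) * B * T ≤ (d + 1) * T :=
    mul_le_mul_of_nonneg_right (by rwa [le_div_iff₀ hd1, mul_comm] at hB) hT
  have hpair := two_mul_sum_Ico_pow_lt hs hs1 hd
  rw [hrange]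
  nlinarith

lemma sub_one_mul_pow_succ_sub_pos {s : ℝ} (hs : 0 ≤ s) (hs1 : s ≠ 1) {d : ℕ} (hd : 2 ≤ d)
    {B : ℝ} (hB : B ≤ (d + 1) / (d - 1)) :
    0 < (s - 1) * (s ^ (d + 1) + B * s - B * s ^ d - 1) := by
  have hfactor : s ^ (d + 1) + B * s - B * s ^ d - 1 =
      (∑ i ∈ range (d + 1), s ^ i) * (s - 1) - B * ((∑ i ∈ Ico 1 d, s ^ i) * (s - 1)) := by
    rw [geom_sum_mul, geom_sum_Ico_mul s (by omega : 1 ≤ d), pow_one]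
    ring
  rw [hfactor, ← mul_assoc, ← sub_mul, mul_comm, mul_assoc, ← sq]
  exact mul_pos (sub_pos.mpr (mul_sum_Ico_pow_lt_sum_range_pow hs hs1 hd hB))
    (sq_pos_of_ne_zero (sub_ne_zero.mpr hs1))

lemma ising_pow_lt_self {d : ℕ} (hd : 2 ≤ d) {B : ℝ} (hB0 : 0 < B)
    (hB : B ≤ (d + 1) / (d - 1)) {s : ℝ} (hs : 1 < s) :
    (B * s ^ d + 1) / (s ^ d + B) < s := by
  have hpos := sub_one_mul_pow_succ_sub_pos (by linarith) hs.ne' hd hB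
  rw [div_lt_iff₀ (by positivity)]
  nlinarith [pos_of_mul_pos_right hpos (sub_nonneg.mpr hs.le), pow_succ s d]

lemma self_lt_ising_pow {d : ℕ} (hd : 2 ≤ d) {B : ℝ} (hB0 : 0 < B)
    (hB : B ≤ (d + 1) / (d - 1)) {s : ℝ} (hs0 : 0 < s) (hs1 : s < 1) :
    s < (B * s ^ d + 1) / (s ^ d + B) := by
  have hpos := sub_one_mul_pow_succ_sub_pos hs0.le hs1.ne hd hB
  rw [lt_div_iff₀ (by positivity)]
  nlinarith [neg_of_mul_pos_right hpos (sub_nonpos.mpr hs1.le), pow_succ s d]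

/-- Key step of Lemma 2.5 of the paper: for an integer `d ≥ 2` and
`0 < B' ≤ (d+1)/(d-1)`, the inequality version of the ferromagnetic Ising
tree recursions has no off-diagonal solutions: (i) there are no `x, y > 1`
with `x^(1/d) ≤ (B'y+1)/(y+B')` and `y^(1/d) ≤ (B'x+1)/(x+B')`, and
(ii) there are no `0 < x, y < 1` with both inequalities reversed. -/
theorem no_offdiagonal_solutions (d : ℕ) (hd : 2 ≤ d) (B' : ℝ)
    (hB0 : 0 < B') (hB : B' ≤ ((d : ℝ) + 1) / ((d : ℝ) - 1)) :
    (¬ ∃ x y : ℝ, 1 < x ∧ 1 < y ∧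
        x ^ ((1 : ℝ) / d) ≤ (B' * y + 1) / (y + B') ∧
        y ^ ((1 : ℝ) / d) ≤ (B' * x + 1) / (x + B')) ∧
    (¬ ∃ x y : ℝ, 0 < x ∧ x < 1 ∧ 0 < y ∧ y < 1 ∧
        (B' * y + 1) / (y + B') ≤ x ^ ((1 : ℝ) / d) ∧
        (B' * x + 1) / (x + B') ≤ y ^ ((1 : ℝ) / d)) := by
  have hroot : ∀ x : ℝ, 0 < x → (x ^ ((1 : ℝ) / d)) ^ d = x := fun x hx => by
    rw [one_div, Real.rpow_inv_natCast_pow hx.le (by omega)]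
  have hexp : (0 : ℝ) < 1 / d := by positivity
  constructor
  · rintro ⟨x, y, hx, hy, hxy, hyx⟩
    have kx := ising_pow_lt_self hd hB0 hB (Real.one_lt_rpow hx hexp)
    have ky := ising_pow_lt_self hd hB0 hB (Real.one_lt_rpow hy hexp)
    rw [hroot x (by linarith)] at kx
    rw [hroot y (by linarith)] at ky
    linarith
  · rintro ⟨x, y, hx0, hx1, hy0, hy1, hxy, hyx⟩
    have kx := self_lt_ising_pow hd hB0 hB (Real.rpow_pos_of_pos hx0 _)
      (Real.rpow_lt_one hx0.le hx1 hexp)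
    have ky := self_lt_ising_pow hd hB0 hB (Real.rpow_pos_of_pos hy0 _)
      (Real.rpow_lt_one hy0.le hy1 hexp)
    rw [hroot x hx0] at kx
    rw [hroot y hy0] at ky
    linarith
end

section
/- Let B₁, B₂ ≥ 0 be reals with B₁·B₂ ≤ 1 and let x, y ≥ 0 be reals. Then B₁·x·y + B₁·B₂·(x + y) + B₂ + (1 − B₁·B₂)·√(x·y) ≤ √((B₁·x + 1)·(B₁·y + 1)·(x + B₂)·(y + B₂)). -/
/-- The AM–GM step (eq:mediuminequality) in the proof of Lemma 3.2 of the
paper: for `B₁, B₂ ≥ 0` with `B₁B₂ ≤ 1` and `x, y ≥ 0`,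
`B₁xy + B₁B₂(x+y) + B₂ + (1-B₁B₂)√(xy) ≤ √((B₁x+1)(B₁y+1)(x+B₂)(y+B₂))`. -/
theorem amgm_medium_inequality (B₁ B₂ x y : ℝ)
    (hB₁ : 0 ≤ B₁) (hB₂ : 0 ≤ B₂) (hB : B₁ * B₂ ≤ 1)
    (hx : 0 ≤ x) (hy : 0 ≤ y) :
    B₁ * x * y + B₁ * B₂ * (x + y) + B₂ + (1 - B₁ * B₂) * Real.sqrt (x * y) ≤
      Real.sqrt ((B₁ * x + 1) * (B₁ * y + 1) * (x + B₂) * (y + B₂)) := by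
  set s := Real.sqrt (x * y) with hsdef
  have hs0 : 0 ≤ s := Real.sqrt_nonneg _
  have hs2 : s ^ 2 = x * y := Real.sq_sqrt (mul_nonneg hx hy)
  have hsx : Real.sqrt x * Real.sqrt y = s := (Real.sqrt_mul hx y).symm
  have h2s : 2 * s ≤ x + y := by
    nlinarith [sq_nonneg (Real.sqrt x - Real.sqrt y), Real.sq_sqrt hx,
      Real.sq_sqrt hy, Real.sqrt_nonneg x, Real.sqrt_nonneg y]
  have hW : 0 ≤ B₁ * x * y + B₁ * B₂ * (x + y) + B₂ := by positivity
  have hL : 0 ≤ B₁ * x * y + B₁ * B₂ * (x + y) + B₂ + (1 - B₁ * B₂) * s := by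
    nlinarith
  refine (Real.le_sqrt hL (by positivity)).mpr ?_
  have key : (B₁ * x + 1) * (B₁ * y + 1) * (x + B₂) * (y + B₂)
      - (B₁ * x * y + B₁ * B₂ * (x + y) + B₂ + (1 - B₁ * B₂) * s) ^ 2
      = (1 - B₁ * B₂) * (B₁ * x * y + B₁ * B₂ * (x + y) + B₂) * (x + y - 2 * s)
        + (1 - B₁ * B₂) ^ 2 * (x * y - s ^ 2) := by ring
  have h1 : 0 ≤ (1 - B₁ * B₂) * (B₁ * x * y + B₁ * B₂ * (x + y) + B₂) * (x + y - 2 * s) :=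
    mul_nonneg (mul_nonneg (by linarith) hW) (by linarith)
  nlinarith [hs2, key, h1]
end

section
/- Let d ≥ 2 be an integer, let λ > 0, and let B₁, B₂ ≥ 0 be reals with B₁·B₂ < 1. Suppose x and y are positive reals with x ≠ y satisfying the tree-recursion system x = λ·((B₁·y + 1)/(y + B₂))^d and y = λ·((B₁·x + 1)/(x + B₂))^d. Then d²·(1 − B₁·B₂)²·x·y < (1 + B₁·x)·(1 + B₁·y)·(B₂ + x)·(B₂ + y); equivalently, (Δ−1)²·ω < 1 with Δ = d+1, where ω = (1 − B₁B₂)²·x·y / ((B₂+x)(B₂+y)(1+B₁x)(1+B₁y)). -/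
open Finset

private lemma pair_amgm_strict {u v c : ℝ} (hu : 0 ≤ u) (hv : 0 ≤ v)
    (h : u * v = c ^ 2) (hne : u ≠ v) : 2 * c < u + v := by
  rcases lt_or_gt_of_ne hne with h' | h' <;> nlinarith [sq_nonneg (u - v)]

private lemma pair_amgm {u v c : ℝ} (hu : 0 ≤ u) (hv : 0 ≤ v) (_hc : 0 ≤ c)
    (h : u * v = c ^ 2) : 2 * c ≤ u + v := by
  nlinarith [sq_nonneg (u - v), sq_nonneg (u + v)]

private lemma sum_sq_gt (p q : ℝ) (hp : 0 < p) (hq : 0 < q) (hpq : p ≠ q)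
    (d : ℕ) (hd : 2 ≤ d) :
    (d : ℝ) ^ 2 * (p * q) ^ (d - 1) < (∑ i ∈ range d, p ^ i * q ^ (d - 1 - i)) ^ 2 := by
  set a : ℕ → ℝ := fun i => p ^ i * q ^ (d - 1 - i) with ha
  set S : ℝ := ∑ i ∈ range d, a i with hS
  have hrefl : ∀ i, i < d → a i * a (d - 1 - i) = (p * q) ^ (d - 1) := by
    intro i hi
    have h1 : d - 1 - (d - 1 - i) = i := by omega
    have h2 : i + (d - 1 - i) = d - 1 := by omega
    have h3 : (d - 1 - i) + i = d - 1 := by omega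
    calc a i * a (d - 1 - i) = p ^ (i + (d - 1 - i)) * q ^ ((d - 1 - i) + i) := by
          simp only [ha, h1, pow_add]; ring
      _ = (p * q) ^ (d - 1) := by rw [h2, h3, mul_pow]
  have hapos : ∀ i, 0 < a i := fun i => mul_pos (pow_pos hp _) (pow_pos hq _)
  have hprod : ∀ i, i < d → ∀ j, j < d →
      (a i * a j) * (a (d - 1 - i) * a (d - 1 - j)) = ((p * q) ^ (d - 1)) ^ 2 := by
    intro i hi j hj
    calc (a i * a j) * (a (d - 1 - i) * a (d - 1 - j))
        = (a i * a (d - 1 - i)) * (a j * a (d - 1 - j)) := by ring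
      _ = ((p * q) ^ (d - 1)) ^ 2 := by rw [hrefl i hi, hrefl j hj, sq]
  have key : ∀ z ∈ range d ×ˢ range d,
      2 * (p * q) ^ (d - 1) ≤ a z.1 * a z.2 + a (d - 1 - z.1) * a (d - 1 - z.2) := by
    rintro ⟨i, j⟩ hz
    rw [mem_product, mem_range, mem_range] at hz
    exact pair_amgm (le_of_lt (mul_pos (hapos _) (hapos _)))
      (le_of_lt (mul_pos (hapos _) (hapos _))) (by positivity) (hprod i hz.1 j hz.2)
  have hstrict : 2 * (p * q) ^ (d - 1) < a 0 * a 0 + a (d - 1 - 0) * a (d - 1 - 0) := by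
    refine pair_amgm_strict (le_of_lt (mul_pos (hapos _) (hapos _)))
      (le_of_lt (mul_pos (hapos _) (hapos _))) (hprod 0 (by omega) 0 (by omega)) ?_
    have h0 : a 0 = q ^ (d - 1) := by simp [ha]
    have h1 : a (d - 1 - 0) = p ^ (d - 1) := by
      simp only [ha, Nat.sub_zero, Nat.sub_self, pow_zero, mul_one]
    rw [h0, h1]
    intro hcon
    have hqp : q ^ (d - 1) = p ^ (d - 1) :=
      (mul_self_inj (by positivity) (by positivity)).mp hcon
    exact hpq ((pow_left_inj₀ hq.le hp.le (by omega : d - 1 ≠ 0)).mp hqp).symm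
  have hsum : ∑ z ∈ range d ×ˢ range d,
      (a z.1 * a z.2 + a (d - 1 - z.1) * a (d - 1 - z.2)) = 2 * S ^ 2 := by
    rw [sum_add_distrib]
    have e1 : ∑ z ∈ range d ×ˢ range d, a z.1 * a z.2 = S ^ 2 := by
      rw [sum_product, sq, hS, Finset.sum_mul_sum]
    have e2 : ∑ z ∈ range d ×ˢ range d, a (d - 1 - z.1) * a (d - 1 - z.2) = S ^ 2 := by
      rw [sum_product]
      have h : ∀ i ∈ range d, ∑ j ∈ range d, a (d - 1 - i) * a (d - 1 - j)
          = a (d - 1 - i) * S := by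
        intro i _
        rw [← mul_sum, hS]
        congr 1
        exact Finset.sum_range_reflect a d
      rw [Finset.sum_congr rfl h, ← Finset.sum_mul, Finset.sum_range_reflect a d, ← hS, sq]
    rw [e1, e2]; ring
  have hlt : ∑ _z ∈ range d ×ˢ range d, (2 * (p * q) ^ (d - 1))
      < ∑ z ∈ range d ×ˢ range d,
        (a z.1 * a z.2 + a (d - 1 - z.1) * a (d - 1 - z.2)) := by
    refine Finset.sum_lt_sum key ⟨(0, 0), ?_, hstrict⟩
    simp only [mem_product, mem_range]
    exact ⟨by omega, by omega⟩
  rw [hsum, Finset.sum_const, Finset.card_product, Finset.card_range, nsmul_eq_mul] at hlt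
  push_cast at hlt
  nlinarith [hlt]

/-- First half of Lemma 3.2 of the paper: under the tree-recursion system with
`x ≠ y`, one has `d²(1-B₁B₂)²xy < (1+B₁x)(1+B₁y)(B₂+x)(B₂+y)`; equivalently
`(Δ-1)²·ω < 1` for `Δ = d+1`, where
`ω = (1-B₁B₂)²xy/((B₂+x)(B₂+y)(1+B₁x)(1+B₁y))`. -/
theorem attracting_fixed_points (d : ℕ) (hd : 2 ≤ d) (lam B₁ B₂ : ℝ)
    (hlam : 0 < lam) (hB₁ : 0 ≤ B₁) (hB₂ : 0 ≤ B₂) (hB : B₁ * B₂ < 1)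
    (x y : ℝ) (hx : 0 < x) (hy : 0 < y) (hxy : x ≠ y)
    (hrecx : x = lam * ((B₁ * y + 1) / (y + B₂)) ^ d)
    (hrecy : y = lam * ((B₁ * x + 1) / (x + B₂)) ^ d) :
    (d : ℝ) ^ 2 * (1 - B₁ * B₂) ^ 2 * x * y <
        (1 + B₁ * x) * (1 + B₁ * y) * (B₂ + x) * (B₂ + y) ∧
      ((d : ℝ) + 1 - 1) ^ 2 *
        ((1 - B₁ * B₂) ^ 2 * x * y /
          ((B₂ + x) * (B₂ + y) * (1 + B₁ * x) * (1 + B₁ * y))) < 1 := by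
  have hxB : 0 < x + B₂ := by linarith
  have hyB : 0 < y + B₂ := by linarith
  have hBB : 0 < 1 - B₁ * B₂ := by linarith
  have hB1x : 0 < 1 + B₁ * x := by nlinarith
  have hB1y : 0 < 1 + B₁ * y := by nlinarith
  set p : ℝ := (B₁ * y + 1) / (y + B₂) with hpdef
  set q : ℝ := (B₁ * x + 1) / (x + B₂) with hqdef
  have hp : 0 < p := div_pos (by nlinarith) hyB
  have hq : 0 < q := div_pos (by nlinarith) hxB
  have hx' : x = lam * p ^ d := hrecx
  have hy' : y = lam * q ^ d := hrecy
  have hpq_sub : (p - q) * ((x + B₂) * (y + B₂)) = (x - y) * (1 - B₁ * B₂) := by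
    rw [hpdef, hqdef]
    field_simp
    ring
  have hpq : p ≠ q := by
    intro h
    apply hxy
    rw [h, sub_self, zero_mul] at hpq_sub
    rcases mul_eq_zero.mp hpq_sub.symm with h1 | h1
    · linarith
    · linarith
  set S : ℝ := ∑ i ∈ Finset.range d, p ^ i * q ^ (d - 1 - i) with hSdef
  have hgeom : S * (p - q) = p ^ d - q ^ d := geom_sum₂_mul p q d
  -- key identity: (x+B₂)(y+B₂) = lam (1-B₁B₂) S
  have hid : (x + B₂) * (y + B₂) = lam * (1 - B₁ * B₂) * S := by
    have h1 : (x - y) * ((x + B₂) * (y + B₂))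
        = lam * S * ((p - q) * ((x + B₂) * (y + B₂))) := by
      have h0 : x - y = lam * (S * (p - q)) := by rw [hgeom, hx', hy']; ring
      rw [h0]; ring
    rw [hpq_sub] at h1
    have h2 : (x - y) * ((x + B₂) * (y + B₂)) = (x - y) * (lam * (1 - B₁ * B₂) * S) := by
      rw [h1]; ring
    exact mul_left_cancel₀ (sub_ne_zero.mpr hxy) h2
  have e1 : 1 + B₁ * x = q * (x + B₂) := by
    rw [hqdef, div_mul_cancel₀ _ (ne_of_gt hxB)]; ring
  have e2 : 1 + B₁ * y = p * (y + B₂) := by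
    rw [hpdef, div_mul_cancel₀ _ (ne_of_gt hyB)]; ring
  have hd1 : p ^ d * q ^ d = (p * q) ^ (d - 1) * (p * q) := by
    rw [← mul_pow, ← pow_succ]
    congr 1
    omega
  have hLHS : (d : ℝ) ^ 2 * (1 - B₁ * B₂) ^ 2 * x * y
      = (lam ^ 2 * (1 - B₁ * B₂) ^ 2 * (p * q)) * ((d : ℝ) ^ 2 * (p * q) ^ (d - 1)) := by
    rw [hx', hy']
    calc (d : ℝ) ^ 2 * (1 - B₁ * B₂) ^ 2 * (lam * p ^ d) * (lam * q ^ d)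
        = (d : ℝ) ^ 2 * (1 - B₁ * B₂) ^ 2 * lam ^ 2 * (p ^ d * q ^ d) := by ring
      _ = _ := by rw [hd1]; ring
  have hRHS : (1 + B₁ * x) * (1 + B₁ * y) * (B₂ + x) * (B₂ + y)
      = (lam ^ 2 * (1 - B₁ * B₂) ^ 2 * (p * q)) * S ^ 2 := by
    calc (1 + B₁ * x) * (1 + B₁ * y) * (B₂ + x) * (B₂ + y)
        = (p * q) * ((x + B₂) * (y + B₂)) ^ 2 := by rw [e1, e2]; ring
      _ = _ := by rw [hid]; ring
  have hmain : (d : ℝ) ^ 2 * (1 - B₁ * B₂) ^ 2 * x * y <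
      (1 + B₁ * x) * (1 + B₁ * y) * (B₂ + x) * (B₂ + y) := by
    rw [hLHS, hRHS]
    exact mul_lt_mul_of_pos_left (sum_sq_gt p q hp hq hpq d hd) (by positivity)
  refine ⟨hmain, ?_⟩
  have hD : 0 < (B₂ + x) * (B₂ + y) * (1 + B₁ * x) * (1 + B₁ * y) := by
    have h1 : 0 < B₂ + x := by linarith
    have h2 : 0 < B₂ + y := by linarith
    positivity
  have heq : ((d : ℝ) + 1 - 1) ^ 2 * ((1 - B₁ * B₂) ^ 2 * x * y /
      ((B₂ + x) * (B₂ + y) * (1 + B₁ * x) * (1 + B₁ * y)))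
      = ((d : ℝ) ^ 2 * (1 - B₁ * B₂) ^ 2 * x * y) /
      ((B₂ + x) * (B₂ + y) * (1 + B₁ * x) * (1 + B₁ * y)) := by
    rw [mul_div_assoc']
    congr 1
    ring
  have hDeq : (B₂ + x) * (B₂ + y) * (1 + B₁ * x) * (1 + B₁ * y)
      = (1 + B₁ * x) * (1 + B₁ * y) * (B₂ + x) * (B₂ + y) := by ring
  rw [heq, div_lt_one hD, hDeq]
  exact hmain
end

section
/- Let B be a real number with 0 < B < 3 − 2·√2, and let y be a real number with 0 < y < 1 satisfying B²·y² + (B² + 2B − 1)·y + B² = 0. Then y < (3/2)·(3/2)^(1/3)·B². -/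
/-- Core of Lemma 7.7 of the paper (`Δ = 3` antiferromagnetic Ising model
without field): if `0 < B < 3 - 2√2` and `0 < y < 1` satisfies
`B²y² + (B² + 2B - 1)y + B² = 0`, then `y < (3/2)·(3/2)^(1/3)·B²`. -/
theorem ising_delta3_root_bound (B y : ℝ)
    (hB0 : 0 < B) (hB : B < 3 - 2 * Real.sqrt 2)
    (hy0 : 0 < y) (hy1 : y < 1)
    (hroot : B ^ 2 * y ^ 2 + (B ^ 2 + 2 * B - 1) * y + B ^ 2 = 0) :
    y < (3 / 2) * ((3 : ℝ) / 2) ^ ((1 : ℝ) / 3) * B ^ 2 := by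
  have hr : (1.14 : ℝ) ≤ ((3 : ℝ) / 2) ^ ((1 : ℝ) / 3) := by
    have h1 : (((1.14 : ℝ) ^ (3 : ℕ)) : ℝ) ^ ((1 : ℝ) / 3) = 1.14 := by
      rw [← Real.rpow_natCast (1.14 : ℝ) 3, ← Real.rpow_mul (by norm_num)]
      norm_num
    calc (1.14 : ℝ) = ((1.14 : ℝ) ^ (3 : ℕ)) ^ ((1 : ℝ) / 3) := h1.symm
      _ ≤ ((3 : ℝ) / 2) ^ ((1 : ℝ) / 3) :=
        Real.rpow_le_rpow (by positivity) (by norm_num) (by norm_num)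
  have hs : (1.41421 : ℝ) < Real.sqrt 2 := by
    rw [show (1.41421 : ℝ) = Real.sqrt (1.41421 ^ 2) from
      (Real.sqrt_sq (by norm_num)).symm]
    exact Real.sqrt_lt_sqrt (by norm_num) (by norm_num)
  have hB' : B < 0.17158 := by nlinarith
  have hmain : y < 1.71 * B ^ 2 := by
    nlinarith [mul_pos hy0 hB0, mul_pos (mul_pos hy0 hy0) hB0,
      mul_pos (mul_pos hy0 hB0) hB0, sq_nonneg (B * y), sq_nonneg B,
      mul_pos hy0 (mul_pos hB0 hB0)]
  have hfin : (1.71 : ℝ) * B ^ 2 ≤ (3 / 2) * ((3 : ℝ) / 2) ^ ((1 : ℝ) / 3) * B ^ 2 := by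
    nlinarith [mul_le_mul_of_nonneg_right hr (sq_nonneg B)]
  linarith
end

section
/- Let B, r₁, r₄ be positive real numbers with r₁·r₄ > 1 and r₁ > 4/(9·B²). Then B²·(r₁ + r₄)² > √(r₁·r₄). -/
/-- Claim 7.9 of the paper: for positive reals `B, r₁, r₄` with `r₁r₄ > 1`
and `r₁ > 4/(9B²)`, one has `B²(r₁+r₄)² > √(r₁r₄)`. -/
theorem ising_delta3_claim (B r₁ r₄ : ℝ) (hB : 0 < B) (hr₁ : 0 < r₁)
    (hr₄ : 0 < r₄) (hprod : 1 < r₁ * r₄) (hr₁big : 4 / (9 * B ^ 2) < r₁) :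
    Real.sqrt (r₁ * r₄) < B ^ 2 * (r₁ + r₄) ^ 2 := by
  set s := Real.sqrt (r₁ * r₄) with hs
  have hs0 : 0 < s := Real.sqrt_pos.mpr (by positivity)
  have hs2 : s ^ 2 = r₁ * r₄ := Real.sq_sqrt (by positivity)
  have hB2 : 0 < B ^ 2 := by positivity
  have hr₁b : 9 * B ^ 2 * r₁ > 4 := by
    have := (div_lt_iff₀ (by positivity)).mp hr₁big
    linarith
  rcases le_or_gt (B ^ 2 * s) (1 / 4) with hcase | hcase
  · rcases le_or_gt (B ^ 2 * s) (16 / 81) with hc2 | hc2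
    · -- B²r₁² > 16/(81B²) ≥ s
      nlinarith [sq_nonneg (3 * B ^ 2 * r₁ - 2), mul_pos hB2 (mul_pos hs0 hs0),
        mul_pos hr₁ hr₄, sq_nonneg r₄, mul_pos hB2 hr₄,
        mul_pos (mul_pos hB2 hr₁) hr₄]
    · nlinarith [sq_nonneg (3 * B ^ 2 * r₁ - 2), mul_pos hB2 (mul_pos hs0 hs0),
        mul_pos hB2 hr₄, mul_pos (mul_pos hB2 hr₁) hr₄, sq_nonneg r₄,
        mul_pos hB2 (mul_pos hr₄ hr₄)]
  · -- 4B²s² > s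
    nlinarith [sq_nonneg (r₁ - r₄), mul_pos hB2 hs0]
end

section
/- Let B₁, B₂ ≥ 0 and x, y > 0 be reals. Set a = B₁²·x·(B₂ + y)/(1 + B₁·y), b = B₁²·y·(B₂ + x)/(1 + B₁·x), w = B₁·B₂, and let A be the 4×4 real matrix with rows (0, a, 0, a), (b, 0, b, 0), (0, 1, 0, w), (1, 0, w, 0). Then the characteristic polynomial of A equals (X² − e₁²)·(X² − e₃²), where e₁² = B₁²·(1 − B₁·B₂)²·x·y/((1 + B₁·x)·(1 + B₁·y)) and e₃² = B₁²·(B₂ + x)·(B₂ + y). In particular the eigenvalues of A are ±e₁ and ±e₃. -/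
open Polynomial Matrix

/-! The matrix only links indices of different parity, so its characteristic polynomial is even,
`X⁴ - tr (P Q) X² + det P det Q` for the off-diagonal blocks `P = !![a, a; 1, w]` and
`Q = !![b, b; 1, w]`. It remains to check that `e₁² + e₃²` and `e₁² e₃²` match these two
coefficients. -/

theorem charpoly_bipartite_fin_four {R : Type*} [CommRing R] (a b w : R) :
    (!![0, a, 0, a; b, 0, b, 0; 0, 1, 0, w; 1, 0, w, 0] : Matrix (Fin 4) (Fin 4) R).charpoly =
      X ^ 4 - C (a * b + a + b + w ^ 2) * X ^ 2 + C (a * b * (1 - w) ^ 2) := by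
  rw [charpoly, det_succ_row_zero]
  simp [Fin.sum_univ_succ, det_fin_three, charmatrix_apply, Fin.succAbove, Fin.succ]
  ring

theorem charpoly_bipartite_fin_four_eq_mul {R : Type*} [CommRing R] {a b w p q : R}
    (hsum : a * b + a + b + w ^ 2 = p + q) (hprod : a * b * (1 - w) ^ 2 = p * q) :
    (!![0, a, 0, a; b, 0, b, 0; 0, 1, 0, w; 1, 0, w, 0] : Matrix (Fin 4) (Fin 4) R).charpoly =
      (X ^ 2 - C p) * (X ^ 2 - C q) := by
  rw [charpoly_bipartite_fin_four, hsum, hprod, map_add, map_mul]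
  ring

theorem transfer_matrix_charpoly_general (B₁ B₂ x y : ℝ)
    (hB₁ : 0 ≤ B₁) (hx : 0 < x) (hy : 0 < y) :
    Matrix.charpoly
      (!![0, B₁ ^ 2 * x * (B₂ + y) / (1 + B₁ * y), 0,
            B₁ ^ 2 * x * (B₂ + y) / (1 + B₁ * y);
          B₁ ^ 2 * y * (B₂ + x) / (1 + B₁ * x), 0,
            B₁ ^ 2 * y * (B₂ + x) / (1 + B₁ * x), 0;
          0, 1, 0, B₁ * B₂;
          1, 0, B₁ * B₂, 0] : Matrix (Fin 4) (Fin 4) ℝ) =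
      (Polynomial.X ^ 2 -
          Polynomial.C (B₁ ^ 2 * (1 - B₁ * B₂) ^ 2 * x * y /
            ((1 + B₁ * x) * (1 + B₁ * y)))) *
        (Polynomial.X ^ 2 - Polynomial.C (B₁ ^ 2 * (B₂ + x) * (B₂ + y))) := by
  have hx' : 1 + B₁ * x ≠ 0 := by positivity
  have hy' : 1 + B₁ * y ≠ 0 := by positivity
  apply charpoly_bipartite_fin_four_eq_mul
  · field_simp
    ring
  · field_simp

/-- The transfer-matrix eigenvalue computation in the proof of Lemma 6.2 of
the paper: with `a = B₁²x(B₂+y)/(1+B₁y)`, `b = B₁²y(B₂+x)/(1+B₁x)`,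
`w = B₁B₂`, the matrix `A` with rows `(0,a,0,a), (b,0,b,0), (0,1,0,w),
(1,0,w,0)` has characteristic polynomial `(X² - e₁²)(X² - e₃²)` where
`e₁² = B₁²(1-B₁B₂)²xy/((1+B₁x)(1+B₁y))` and `e₃² = B₁²(B₂+x)(B₂+y)`. -/
theorem transfer_matrix_charpoly (B₁ B₂ x y : ℝ)
    (hB₁ : 0 ≤ B₁) (hB₂ : 0 ≤ B₂) (hx : 0 < x) (hy : 0 < y) :
    Matrix.charpoly
      (!![0, B₁ ^ 2 * x * (B₂ + y) / (1 + B₁ * y), 0,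
            B₁ ^ 2 * x * (B₂ + y) / (1 + B₁ * y);
          B₁ ^ 2 * y * (B₂ + x) / (1 + B₁ * x), 0,
            B₁ ^ 2 * y * (B₂ + x) / (1 + B₁ * x), 0;
          0, 1, 0, B₁ * B₂;
          1, 0, B₁ * B₂, 0] : Matrix (Fin 4) (Fin 4) ℝ) =
      (Polynomial.X ^ 2 -
          Polynomial.C (B₁ ^ 2 * (1 - B₁ * B₂) ^ 2 * x * y /
            ((1 + B₁ * x) * (1 + B₁ * y)))) *
        (Polynomial.X ^ 2 - Polynomial.C (B₁ ^ 2 * (B₂ + x) * (B₂ + y))) :=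
  transfer_matrix_charpoly_general B₁ B₂ x y hB₁ hx hy
end
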